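/- For an integer k ≥ 1, define D : [1/2, 1] → ℝ by D(y) = ((1/2 + 1/(4k))y) / ((1/2 + 1/(4k))y + (1/2 − 1/(4k))(1−y)) − ((1/2 − 1/(4k))y) / ((1/2 − 1/(4k))y + (1/2 + 1/(4k))(1−y)). Then D is nonincreasing on [1/2, 1], and for every y ∈ [1/2, 9/10], D(y) ≥ 9k/(50k² − 8) ≥ 1/(6k). -/

import Mathlib

/-! With `t = y(1-y)` the two posteriors differ by `(a² - b²) t / (ab + (a - b)² t)`, which for
`a, b = 1/2 ± 1/(4k)` is `8kt / (4k² - 1 + 4t)`. This is increasing in `t ≥ 0`, and `t` decreases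
on `[1/2, 1]`, so `D` is antitone there; its minimum over `[1/2, 9/10]` is
`D(9/10) = 9k / (50k² - 8)`. -/

noncomputable section

/-- The difference `D(y)` between the conditional probabilities of the high forecast. -/
def Dk (k : ℕ) (y : ℝ) : ℝ :=
  ((1/2 + 1/(4*(k:ℝ))) * y)
      / ((1/2 + 1/(4*(k:ℝ))) * y + (1/2 - 1/(4*(k:ℝ))) * (1 - y))
    - ((1/2 - 1/(4*(k:ℝ))) * y)
      / ((1/2 - 1/(4*(k:ℝ))) * y + (1/2 + 1/(4*(k:ℝ))) * (1 - y))

theorem mul_div_sub_mul_div_swap {a b y : ℝ} (h₁ : a * y + b * (1 - y) ≠ 0)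
    (h₂ : b * y + a * (1 - y) ≠ 0) :
    a * y / (a * y + b * (1 - y)) - b * y / (b * y + a * (1 - y)) =
      (a ^ 2 - b ^ 2) * (y * (1 - y)) / (a * b + (a - b) ^ 2 * (y * (1 - y))) := by
  have h : a * b + (a - b) ^ 2 * (y * (1 - y)) = (a * y + b * (1 - y)) * (b * y + a * (1 - y)) := by
    ring
  rw [h, div_sub_div _ _ h₁ h₂]
  ring

theorem Dk_eq {k : ℕ} (hk : 1 ≤ k) {y : ℝ} (hy : y ∈ Set.Icc (0 : ℝ) 1) :
    Dk k y = 8 * k * (y * (1 - y)) / (4 * k ^ 2 - 1 + 4 * (y * (1 - y))) := by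
  obtain ⟨hy₀, hy₁⟩ := hy
  have hK : (1 : ℝ) ≤ k := by exact_mod_cast hk
  have hc : 1/(4*(k:ℝ)) ≤ 1/4 := by gcongr; linarith
  have hc₀ : 0 ≤ 1/(4*(k:ℝ)) := by positivity
  have h₁ : 0 < (1/2 + 1/(4*(k:ℝ))) * y + (1/2 - 1/(4*(k:ℝ))) * (1 - y) := by nlinarith
  have h₂ : 0 < (1/2 - 1/(4*(k:ℝ))) * y + (1/2 + 1/(4*(k:ℝ))) * (1 - y) := by nlinarith
  have h₃ : 0 < 4 * (k:ℝ) ^ 2 - 1 + 4 * (y * (1 - y)) := by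
    nlinarith [mul_nonneg hy₀ (sub_nonneg.2 hy₁)]
  rw [Dk, mul_div_sub_mul_div_swap h₁.ne' h₂.ne', div_eq_div_iff _ h₃.ne']
  · field_simp
    ring
  · nlinarith

theorem monotoneOn_mul_div_add_mul {p q r : ℝ} (hp : 0 ≤ p) (hq : 0 < q) (hr : 0 ≤ r) :
    MonotoneOn (fun t => p * t / (q + r * t)) (Set.Ici 0) := by
  intro s (hs : 0 ≤ s) t (ht : 0 ≤ t) hst
  rw [div_le_div_iff₀ (by positivity) (by positivity)]
  nlinarith [mul_le_mul_of_nonneg_left hst (mul_nonneg hp hq.le)]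

theorem antitoneOn_mul_one_sub : AntitoneOn (fun y : ℝ => y * (1 - y)) (Set.Ici (1/2)) := by
  intro x (hx : 1/2 ≤ x) y (hy : 1/2 ≤ y) hxy
  nlinarith

theorem antitoneOn_Dk {k : ℕ} (hk : 1 ≤ k) : AntitoneOn (Dk k) (Set.Icc (1/2 : ℝ) 1) := by
  have hK : (1 : ℝ) ≤ k := by exact_mod_cast hk
  intro x hx y hy hxy
  have hx₀ : x ∈ Set.Icc (0 : ℝ) 1 := ⟨by linarith [hx.1], hx.2⟩
  have hy₀ : y ∈ Set.Icc (0 : ℝ) 1 := ⟨by linarith [hy.1], hy.2⟩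
  rw [Dk_eq hk hx₀, Dk_eq hk hy₀]
  refine monotoneOn_mul_div_add_mul (by positivity) (by nlinarith) (by norm_num) ?_ ?_
    (antitoneOn_mul_one_sub hx.1 hy.1 hxy)
  · exact mul_nonneg hy₀.1 (sub_nonneg.2 hy₀.2)
  · exact mul_nonneg hx₀.1 (sub_nonneg.2 hx₀.2)

theorem stmt_15 (k : ℕ) (hk : 1 ≤ k) :
    AntitoneOn (Dk k) (Set.Icc (1/2 : ℝ) 1) ∧
    ∀ y ∈ Set.Icc (1/2 : ℝ) (9/10),
      9*(k:ℝ)/(50*(k:ℝ)^2 - 8) ≤ Dk k y ∧ 1/(6*(k:ℝ)) ≤ 9*(k:ℝ)/(50*(k:ℝ)^2 - 8) := by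
  have hK : (1 : ℝ) ≤ k := by exact_mod_cast hk
  have hD : Dk k (9/10) = 9 * k / (50 * k ^ 2 - 8) := by
    rw [Dk_eq hk ⟨by norm_num, by norm_num⟩, div_eq_div_iff (by nlinarith) (by nlinarith)]
    ring
  refine ⟨antitoneOn_Dk hk, fun y ⟨hy₁, hy₂⟩ => ⟨?_, ?_⟩⟩
  · rw [← hD]
    exact antitoneOn_Dk hk ⟨hy₁, by linarith⟩ ⟨by norm_num, by norm_num⟩ hy₂
  · rw [div_le_div_iff₀ (by positivity) (by nlinarith)]
    nlinarith
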